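/- Let r > 1 be real, let K be a number field, and let h ≥ 1 be an integer such that for every integer d with 2 ≤ d ≤ h one has d^{-r} > ∑_{n > d} a_K(n)·n^{-r}. Then the closure of σ_{r,K}(I_K) has at least ∏_{n=2}^{h} (b_K(n) + 1) connected components. -/

import Mathlib

open NumberField

/-- The ideal divisor function `σ_{r,K}(I) = ∑_{J ∣ I} N(J)^{-r}`. -/
noncomputable def sigmaK (K : Type*) [Field K] [NumberField K] (r : ℝ)
    (I : Ideal (𝓞 K)) : ℝ :=
  ∑' J : {J : Ideal (𝓞 K) // J ∣ I}, (Ideal.absNorm (J : Ideal (𝓞 K)) : ℝ) ^ (-r)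

/-- `a_K(n)`: the number of nonzero integral ideals of `𝓞_K` of absolute norm `n`. -/
noncomputable def aK (K : Type*) [Field K] [NumberField K] (n : ℕ) : ℕ :=
  {I : Ideal (𝓞 K) | Ideal.absNorm I = n}.ncard

/-- `b_K(n)`: the number of nonzero prime ideals of `𝓞_K` of absolute norm `n`. -/
noncomputable def bK (K : Type*) [Field K] [NumberField K] (n : ℕ) : ℕ :=
  {P : Ideal (𝓞 K) | P.IsPrime ∧ Ideal.absNorm P = n}.ncard

/-!
Sort the nonzero ideals `I` by their vector of divisor counts `v_I(d) = #{J ∣ I : N J = d}`,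
`2 ≤ d ≤ h`. Since `σ_{r,K}(I) = ∑_d v_I(d) d^{-r}` with `v_I(1) = 1` and `0 ≤ v_I(d) ≤ a_K(d)`,
two ideals whose vectors first differ at `d` have `σ`-values at distance at least
`d^{-r} - ∑_{n > d} a_K(n) n^{-r} > 0`. So the closures of the finitely many classes are disjoint
closed sets covering the closure of the image; each is clopen in it, and distinct classes lie in
distinct connected components. To realise `∏ (b_K(n) + 1)` classes, take the product of `e_n`
primes of norm `n` for each `n ≤ h` (`0 ≤ e_n ≤ b_K(n)`): its count `v(n)` is `e_n` plus the number
of sets of primes of smaller norm whose norms multiply to `n`, which only depends on the `e_m` with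
`m < n`, so the vector `v` determines `e`.
-/

section SquarefreeProduct
open UniqueFactorizationMonoid

variable {α : Type*} [CommMonoidWithZero α] [NormalizationMonoid α] [UniqueFactorizationMonoid α]
  [Subsingleton αˣ]

theorem normalizedFactors_finset_prod_primes {T : Finset α} (hT : ∀ p ∈ T, Prime p) :
    normalizedFactors (∏ p ∈ T, p) = T.val := by
  rw [Finset.prod_eq_multiset_prod, Multiset.map_id']
  exact normalizedFactors_prod_of_prime hT

theorem finset_prod_primes_injOn :
    Set.InjOn (fun T : Finset α => ∏ p ∈ T, p) {T | ∀ p ∈ T, Prime p} := fun T hT T' hT' h => by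
  rw [← Finset.val_inj, ← normalizedFactors_finset_prod_primes hT,
    ← normalizedFactors_finset_prod_primes hT']
  exact congrArg normalizedFactors h

theorem exists_subset_eq_prod_of_dvd_prod_primes {T : Finset α} (hT : ∀ p ∈ T, Prime p) {a : α}
    (ha : a ∣ ∏ p ∈ T, p) : ∃ U ⊆ T, a = ∏ p ∈ U, p := by
  rcases subsingleton_or_nontrivial α with _ | _
  · exact ⟨∅, T.empty_subset, Subsingleton.elim _ _⟩
  have hprod : ∏ p ∈ T, p ≠ 0 := Finset.prod_ne_zero_iff.mpr fun p hp => (hT p hp).ne_zero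
  have ha0 : a ≠ 0 := fun h => hprod (zero_dvd_iff.mp (h ▸ ha))
  have hle : normalizedFactors a ≤ T.val := by
    rw [← normalizedFactors_finset_prod_primes hT]
    exact (dvd_iff_normalizedFactors_le_normalizedFactors ha0 hprod).mp ha
  refine ⟨⟨normalizedFactors a, Multiset.nodup_of_le hle T.nodup⟩,
    fun p hp => Multiset.subset_of_le hle hp, ?_⟩
  rw [Finset.prod_mk, Multiset.map_id']
  exact (associated_iff_eq.mp (prod_normalizedFactors ha0)).symm
end SquarefreeProduct

section PowersetProducts
open Finset

theorem eq_singleton_of_prod_eq_of_le {α : Type*} [DecidableEq α] {U : Finset α} {f : α → ℕ}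
    (hf : ∀ a ∈ U, 2 ≤ f a) {n : ℕ} (hU : ∏ a ∈ U, f a = n) {a : α} (ha : a ∈ U)
    (hna : n ≤ f a) : U = {a} ∧ f a = n := by
  have hpos : 0 < n := hU ▸ prod_pos fun b hb => by linarith [hf b hb]
  have hfa : f a = n := le_antisymm (Nat.le_of_dvd hpos (hU ▸ dvd_prod_of_mem f ha)) hna
  have hrest : ∏ b ∈ U.erase a, f b = 1 := by
    rw [← mul_prod_erase U f ha, hfa] at hU
    exact (Nat.mul_eq_left hpos.ne').mp hU
  rw [prod_eq_one_iff_of_one_le' fun b hb => by linarith [hf b (mem_of_mem_erase hb)]] at hrest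
  refine ⟨?_, hfa⟩
  rcases erase_eq_empty_iff U a |>.mp (eq_empty_of_forall_notMem fun b hb => by
    linarith [hrest b hb, hf b (mem_of_mem_erase hb)]) with h | h
  · exact absurd (h ▸ ha) (notMem_empty a)
  · exact h

theorem card_filter_powerset_prod_eq {α : Type*} [DecidableEq α] {T : Finset α} {f : α → ℕ}
    (hf : ∀ a ∈ T, 2 ≤ f a) (n : ℕ) :
    #{U ∈ T.powerset | ∏ a ∈ U, f a = n} =
      #{a ∈ T | f a = n} + #{U ∈ {a ∈ T | f a < n}.powerset | ∏ a ∈ U, f a = n} := by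
  have hsub : {U ∈ {a ∈ T | f a < n}.powerset | ∏ a ∈ U, f a = n} ⊆
      {U ∈ T.powerset | ∏ a ∈ U, f a = n} :=
    filter_subset_filter _ (powerset_mono.mpr (filter_subset _ _))
  have hsingle : {U ∈ T.powerset | ∏ a ∈ U, f a = n} \
      {U ∈ {a ∈ T | f a < n}.powerset | ∏ a ∈ U, f a = n} =
      {a ∈ T | f a = n}.map ⟨singleton, singleton_injective⟩ := by
    ext U
    simp only [mem_sdiff, mem_filter, mem_powerset, mem_map, Function.Embedding.coeFn_mk]
    constructor
    · rintro ⟨⟨hUT, hU⟩, hsmall⟩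
      obtain ⟨a, ha, hna⟩ : ∃ a ∈ U, n ≤ f a := by
        by_contra! h
        exact hsmall ⟨fun a ha => mem_filter.mpr ⟨hUT ha, h a ha⟩, hU⟩
      obtain ⟨rfl, hfa⟩ := eq_singleton_of_prod_eq_of_le (fun b hb => hf b (hUT hb)) hU ha hna
      exact ⟨a, ⟨singleton_subset_iff.mp hUT, hfa⟩, rfl⟩
    · rintro ⟨a, ⟨haT, hfa⟩, rfl⟩
      refine ⟨⟨singleton_subset_iff.mpr haT, by simp [hfa]⟩, fun h => ?_⟩
      have := (mem_filter.mp (singleton_subset_iff.mp h.1)).2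
      omega
  rw [← card_sdiff_add_card_eq_card hsub, hsingle, card_map]

end PowersetProducts

universe u

section Topology
open Set Function

theorem isClopen_of_pairwise_disjoint_of_finite_cover {Y ι : Type*} [TopologicalSpace Y]
    {Q : ι → Set Y} {s : Set ι} (hs : s.Finite) (hclosed : ∀ i, IsClosed (Q i))
    (hdisj : Pairwise (Disjoint on Q)) (hcover : ⋃ i ∈ s, Q i = univ) (i : ι) :
    IsClopen (Q i) := by
  refine ⟨hclosed i, ?_⟩
  have hcompl : (Q i)ᶜ = ⋃ j ∈ s \ {i}, Q j := by
    ext x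
    simp only [mem_compl_iff, mem_iUnion, mem_sdiff, mem_singleton_iff, exists_prop]
    constructor
    · intro hxi
      obtain ⟨j, hj, hxj⟩ := mem_iUnion₂.mp (hcover ▸ mem_univ x)
      exact ⟨j, ⟨hj, fun hji => hxi (hji ▸ hxj)⟩, hxj⟩
    · rintro ⟨j, ⟨-, hji⟩, hxj⟩ hxi
      exact disjoint_left.mp (hdisj hji) hxj hxi
  rw [← isClosed_compl_iff, hcompl]
  exact hs.sdiff.isClosed_biUnion fun j _ => hclosed j

variable {X : Type u} [PseudoMetricSpace X]

theorem le_dist_of_mem_closure {s t : Set X} {ε : ℝ} (h : ∀ x ∈ s, ∀ y ∈ t, ε ≤ dist x y)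
    {x y : X} (hx : x ∈ closure s) (hy : y ∈ closure t) : ε ≤ dist x y := by
  have hst : s ×ˢ t ⊆ {p : X × X | ε ≤ dist p.1 p.2} := fun p hp => h _ hp.1 _ hp.2
  have := closure_minimal hst (isClosed_le continuous_const continuous_dist)
  exact this (closure_prod_eq (s := s) (t := t) ▸ mk_mem_prod hx hy)

theorem mk_image_le_mk_connectedComponents_closure {α : Type*} {ι : Type u} (f : α → X)
    (c : α → ι) {A : Set α} (hfin : (c '' A).Finite)
    (hsep : ∀ i j, i ≠ j →
      ∃ ε > 0, ∀ a ∈ A, ∀ b ∈ A, c a = i → c b = j → ε ≤ dist (f a) (f b)) :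
    Cardinal.mk (c '' A) ≤ Cardinal.mk (ConnectedComponents (closure (f '' A))) := by
  set P : ι → Set X := fun i => closure (f '' {a ∈ A | c a = i})
  have hmem : ∀ a ∈ A, f a ∈ P (c a) := fun a ha => subset_closure ⟨a, ⟨ha, rfl⟩, rfl⟩
  have hdisj : Pairwise (Disjoint on P) := by
    intro i j hij
    obtain ⟨ε, hε, h⟩ := hsep i j hij
    refine disjoint_left.mpr fun x hxi hxj => ?_
    have := le_dist_of_mem_closure (s := f '' {a ∈ A | c a = i}) (t := f '' {a ∈ A | c a = j})
      (by rintro _ ⟨a, ⟨ha, rfl⟩, rfl⟩ _ ⟨b, ⟨hb, rfl⟩, rfl⟩; exact h a ha b hb rfl rfl) hxi hxj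
    rw [dist_self] at this
    linarith
  have hcover : closure (f '' A) = ⋃ i ∈ c '' A, P i := by
    rw [← hfin.closure_biUnion, biUnion_image]
    congr 1
    ext x
    simp only [mem_image, mem_iUnion, mem_ofPred_eq, exists_prop]
    exact ⟨fun ⟨a, ha, hx⟩ => ⟨a, ha, a, ⟨ha, rfl⟩, hx⟩,
      fun ⟨_, _, a, ⟨ha, _⟩, hx⟩ => ⟨a, ha, hx⟩⟩
  have hclopen (i : ι) : IsClopen ((↑) ⁻¹' P i : Set (closure (f '' A))) :=
    isClopen_of_pairwise_disjoint_of_finite_cover hfin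
      (fun j => isClosed_closure.preimage continuous_subtype_val)
      (fun j k hjk => (hdisj hjk).preimage _)
      (by rw [← preimage_iUnion₂, ← hcover, Subtype.coe_preimage_self]) i
  let φ (a : A) : ConnectedComponents (closure (f '' A)) :=
    ConnectedComponents.mk ⟨f a, subset_closure (mem_image_of_mem f a.2)⟩
  have hφ (a b : A) (hab : φ a = φ b) : c a = c b := by
    by_contra hne
    have := (hclopen (c a)).connectedComponent_subset (hmem a a.2)
      (ConnectedComponents.coe_eq_coe'.mp hab.symm)
    exact disjoint_left.mp (hdisj hne) this (hmem b b.2)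
  refine Cardinal.mk_le_of_injective (f := fun i : c '' A => φ ⟨_, i.2.choose_spec.1⟩) ?_
  rintro ⟨i, hi⟩ ⟨j, hj⟩ hij
  have := hφ _ _ hij
  simp only [hi.choose_spec.2, hj.choose_spec.2] at this
  exact Subtype.ext this
end Topology

open Set in
theorem abs_sub_tsum_gt_le_abs_tsum {f g : ℕ → ℝ} {d : ℕ} (hg : Summable g)
    (hfg : ∀ n, |f n| ≤ g n) (hf : ∀ n < d, f n = 0) :
    |f d| - ∑' n : {n // d < n}, g n ≤ |∑' n, f n| := by
  set tail := {n | d < n}.indicator f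
  have hsplit : f = Pi.single d (f d) + tail := by
    ext n
    rcases lt_trichotomy n d with h | rfl | h
    · simp [tail, hf n h, h.ne, h.not_gt]
    · simp [tail]
    · simp [tail, h, h.ne']
  have htail : |∑' n, tail n| ≤ ∑' n : {n // d < n}, g n := by
    rw [show (∑' n : {n // d < n}, g n) = ∑' n : {n | d < n}, g n from rfl, tsum_subtype]
    refine tsum_of_norm_bounded (f := tail) (hg.indicator _).hasSum fun n => ?_
    by_cases hn : n ∈ {n | d < n} <;> simp [tail, hn, hfg n]
  have hsum : ∑' n, f n = f d + ∑' n, tail n := by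
    conv_lhs => rw [hsplit]
    simp only [Pi.add_apply]
    rw [Summable.tsum_add (hasSum_pi_single d (f d)).summable
      ((Summable.of_norm_bounded (f := f) hg hfg).indicator _), tsum_pi_single]
  have := abs_sub (∑' n, f n) (∑' n, tail n)
  rw [hsum, add_sub_cancel_right, ← hsum] at this
  linarith

section DivisorsOfNorm
open Finset
variable {K : Type*} [Field K] [NumberField K]

noncomputable def numDivisorsOfNorm (I : Ideal (𝓞 K)) (n : ℕ) : ℕ :=
  {J : Ideal (𝓞 K) | J ∣ I ∧ Ideal.absNorm J = n}.ncard

theorem numDivisorsOfNorm_le_aK (I : Ideal (𝓞 K)) (n : ℕ) : numDivisorsOfNorm I n ≤ aK K n :=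
  Set.ncard_le_ncard (fun _ hJ => hJ.2) (Ideal.finite_setOfPred_absNorm_eq n)

theorem numDivisorsOfNorm_one (I : Ideal (𝓞 K)) : numDivisorsOfNorm I 1 = 1 := by
  have : {J : Ideal (𝓞 K) | J ∣ I ∧ Ideal.absNorm J = 1} = {⊤} := by
    ext J
    simp only [Set.mem_ofPred_eq, Set.mem_singleton_iff, Ideal.absNorm_eq_one_iff]
    exact ⟨And.right, fun hJ => ⟨hJ ▸ Ideal.one_eq_top (R := 𝓞 K) ▸ one_dvd I, hJ⟩⟩
  rw [numDivisorsOfNorm, this, Set.ncard_singleton]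

theorem hasSum_sigmaK (r : ℝ) {I : Ideal (𝓞 K)} (hI : I ≠ 0) :
    HasSum (fun n : ℕ => (numDivisorsOfNorm I n : ℝ) * (n : ℝ) ^ (-r)) (sigmaK K r I) := by
  classical
  let := UniqueFactorizationMonoid.fintypeSubtypeDvd I hI
  set N : {J : Ideal (𝓞 K) // J ∣ I} → ℕ := fun J => Ideal.absNorm (J : Ideal (𝓞 K))
  have hcount : ∀ n, #{J | N J = n} = numDivisorsOfNorm I n := fun n => by
    rw [← Fintype.card_subtype, ← Nat.card_eq_fintype_card, numDivisorsOfNorm,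
      ← Nat.card_coe_set_eq]
    exact Nat.card_congr (Equiv.subtypeSubtypeEquivSubtypeInter (· ∣ I) (Ideal.absNorm · = n))
  have hσ : sigmaK K r I =
      ∑ n ∈ univ.image N, (numDivisorsOfNorm I n : ℝ) * (n : ℝ) ^ (-r) := by
    rw [sigmaK, tsum_fintype, sum_comp (fun n : ℕ => (n : ℝ) ^ (-r)) N]
    simp only [hcount, nsmul_eq_mul]
  rw [hσ]
  refine hasSum_sum_of_ne_finset_zero fun n hn => ?_
  rw [← hcount, card_eq_zero.mpr (filter_eq_empty_iff.mpr fun J _ (hJ : N J = n) =>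
    hn (hJ ▸ mem_image_of_mem N (mem_univ J))), Nat.cast_zero, zero_mul]

theorem summable_aK_mul_rpow {r : ℝ} (hr : 1 < r) :
    Summable (fun n : ℕ => (aK K n : ℝ) * (n : ℝ) ^ (-r)) := by
  set f : ℕ → ℂ := fun n => Nat.card {I : Ideal (𝓞 K) // Ideal.absNorm I = n}
  -- `dedekindZeta K = LSeries f` has a pole at `1`, so it is nonzero, hence convergent, near `1`
  obtain ⟨s, hne, -, hsr⟩ : ∃ s : ℝ, dedekindZeta K s ≠ 0 ∧ 1 < s ∧ s < r := by
    have hev := (tendsto_sub_one_mul_dedekindZeta_nhdsGT K).eventually_ne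
      (Complex.ofReal_ne_zero.mpr (dedekindZeta_residue_ne_zero K))
    obtain ⟨s, hne, hs⟩ := (hev.and (Ioo_mem_nhdsGT hr)).exists
    exact ⟨s, right_ne_zero_of_mul hne, hs⟩
  have hf : LSeriesSummable f r :=
    (not_not.mp (mt (LSeries.eq_zero_of_not_LSeriesSummable f s) hne)).of_re_le_re
      (by simpa using hsr.le)
  refine (summable_norm_iff.mpr hf).congr fun n => ?_
  rw [LSeries.norm_term_eq]
  rcases eq_or_ne n 0 with rfl | hn
  · simp [Real.zero_rpow (by linarith : -r ≠ 0)]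
  · simp [hn, f, aK, Real.rpow_neg, div_eq_mul_inv]
    exact Or.inl rfl

theorem sub_tail_le_abs_sigmaK_sub {r : ℝ} (hr : 1 < r) {I I' : Ideal (𝓞 K)} (hI : I ≠ 0)
    (hI' : I' ≠ 0) {d : ℕ}
    (hagree : ∀ n, 2 ≤ n → n < d → numDivisorsOfNorm I n = numDivisorsOfNorm I' n)
    (hne : numDivisorsOfNorm I d ≠ numDivisorsOfNorm I' d) :
    (d : ℝ) ^ (-r) - ∑' n : {n : ℕ // d < n}, (aK K n : ℝ) * (n : ℝ) ^ (-r) ≤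
      |sigmaK K r I - sigmaK K r I'| := by
  set f : ℕ → ℝ := fun n =>
    ((numDivisorsOfNorm I n : ℝ) - numDivisorsOfNorm I' n) * (n : ℝ) ^ (-r)
  have hσ : sigmaK K r I - sigmaK K r I' = ∑' n, f n := by
    simp only [f, sub_mul]
    exact ((hasSum_sigmaK r hI).sub (hasSum_sigmaK r hI')).tsum_eq.symm
  have hbound (n : ℕ) : |f n| ≤ (aK K n : ℝ) * (n : ℝ) ^ (-r) := by
    rw [abs_mul, abs_of_nonneg (by positivity : (0 : ℝ) ≤ (n : ℝ) ^ (-r))]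
    gcongr
    exact abs_sub_le_of_nonneg_of_le (by positivity)
      (by exact_mod_cast numDivisorsOfNorm_le_aK I n) (by positivity)
      (by exact_mod_cast numDivisorsOfNorm_le_aK I' n)
  have hlow : ∀ n < d, f n = 0 := fun n hn => by
    rcases Nat.lt_or_ge n 2 with h | h
    · interval_cases n
      · simp [f, Real.zero_rpow (by linarith : -r ≠ 0)]
      · simp [f, numDivisorsOfNorm_one]
    · simp [f, hagree n h hn]
  have hfd : (d : ℝ) ^ (-r) ≤ |f d| := by
    rw [abs_mul, abs_of_nonneg (by positivity : (0 : ℝ) ≤ (d : ℝ) ^ (-r))]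
    refine le_mul_of_one_le_left (by positivity) ?_
    exact_mod_cast Int.one_le_abs (sub_ne_zero.mpr (Int.natCast_inj.not.mpr hne))
  have := abs_sub_tsum_gt_le_abs_tsum (summable_aK_mul_rpow hr) hbound hlow
  rw [hσ]
  linarith

noncomputable def divisorCounts (h : ℕ) (I : Ideal (𝓞 K)) (n : Icc 2 h) : ℕ :=
  numDivisorsOfNorm I n

theorem finite_range_divisorCounts (h : ℕ) : (Set.range (divisorCounts (K := K) h)).Finite := by
  refine (Set.Finite.pi fun n : Icc 2 h => Set.finite_Iic (aK K n)).subset ?_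
  rintro _ ⟨I, rfl⟩ n -
  exact numDivisorsOfNorm_le_aK I n

theorem exists_pos_le_dist_sigmaK_of_divisorCounts_ne {r : ℝ} (hr : 1 < r) {h : ℕ}
    (hyp : ∀ d : ℕ, 2 ≤ d → d ≤ h →
      ∑' n : {n : ℕ // d < n}, (aK K n : ℝ) * (n : ℝ) ^ (-r) < (d : ℝ) ^ (-r))
    {i j : Icc 2 h → ℕ} (hij : i ≠ j) :
    ∃ ε > 0, ∀ I ∈ {I : Ideal (𝓞 K) | I ≠ 0}, ∀ I' ∈ {I : Ideal (𝓞 K) | I ≠ 0},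
      divisorCounts h I = i → divisorCounts h I' = j → ε ≤ dist (sigmaK K r I) (sigmaK K r I') := by
  obtain ⟨d, hd, hmin⟩ := wellFounded_lt.has_min {d | i d ≠ j d} (Function.ne_iff.mp hij)
  have hd' := mem_Icc.mp d.2
  refine ⟨_, sub_pos.mpr (hyp d hd'.1 hd'.2), fun I hI I' hI' hIi hI'j => ?_⟩
  subst hIi hI'j
  rw [Real.dist_eq]
  refine sub_tail_le_abs_sigmaK_sub hr hI hI' (fun n hn2 hnd => ?_) hd
  by_contra hne
  exact hmin ⟨n, mem_Icc.mpr ⟨hn2, by omega⟩⟩ hne hnd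

end DivisorsOfNorm

section TestIdeals
open Finset
variable {K : Type*} [Field K] [NumberField K]

theorem numDivisorsOfNorm_prod_primes {T : Finset (Ideal (𝓞 K))} (hT : ∀ P ∈ T, Prime P)
    (n : ℕ) :
    numDivisorsOfNorm (∏ P ∈ T, P) n = #{U ∈ T.powerset | ∏ P ∈ U, Ideal.absNorm P = n} := by
  have hdiv : {J | J ∣ ∏ P ∈ T, P ∧ Ideal.absNorm J = n} =
      ↑({U ∈ T.powerset | ∏ P ∈ U, Ideal.absNorm P = n}.image fun U => ∏ P ∈ U, P) := by
    ext J
    simp only [coe_image, Set.mem_image, mem_coe, mem_filter, mem_powerset, Set.mem_ofPred_eq]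
    constructor
    · rintro ⟨hJ, hN⟩
      obtain ⟨U, hUT, rfl⟩ := exists_subset_eq_prod_of_dvd_prod_primes hT hJ
      exact ⟨U, ⟨hUT, by rwa [map_prod] at hN⟩, rfl⟩
    · rintro ⟨U, ⟨hUT, hN⟩, rfl⟩
      exact ⟨prod_dvd_prod_of_subset _ _ _ hUT, by rwa [map_prod]⟩
  rw [numDivisorsOfNorm, hdiv, Set.ncard_coe_finset, card_image_of_injOn]
  exact finset_prod_primes_injOn.mono fun U hU P hP =>
    hT P (mem_powerset.mp (mem_filter.mp hU).1 hP)

theorem exists_finset_primes_of_absNorm_eq {n k : ℕ} (hk : k ≤ bK K n) :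
    ∃ S : Finset (Ideal (𝓞 K)), (∀ P ∈ S, P.IsPrime ∧ Ideal.absNorm P = n) ∧ #S = k := by
  have hfin : {P : Ideal (𝓞 K) | P.IsPrime ∧ Ideal.absNorm P = n}.Finite :=
    (Ideal.finite_setOfPred_absNorm_eq n).subset fun _ hP => hP.2
  obtain ⟨S, hS, hcard⟩ := exists_subset_card_eq (s := hfin.toFinset) (n := k)
    (by rwa [← Set.ncard_eq_toFinset_card _ hfin])
  exact ⟨S, fun P hP => hfin.mem_toFinset.mp (hS hP), hcard⟩

variable {h : ℕ} (S : (n : ℕ) → Fin (bK K n + 1) → Finset (Ideal (𝓞 K)))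

noncomputable def testPrimes (t : (n : Icc 2 h) → Fin (bK K n + 1)) : Finset (Ideal (𝓞 K)) :=
  univ.biUnion fun n : Icc 2 h => S n (t n)

variable {S} (hS : ∀ n k, ∀ P ∈ S n k, P.IsPrime ∧ Ideal.absNorm P = n)
include hS

theorem absNorm_mem_Icc_of_mem_testPrimes {t : (n : Icc 2 h) → Fin (bK K n + 1)}
    {P : Ideal (𝓞 K)} (hP : P ∈ testPrimes S t) : Ideal.absNorm P ∈ Icc 2 h := by
  obtain ⟨n, -, hPn⟩ := mem_biUnion.mp hP
  exact (hS n _ P hPn).2 ▸ n.2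

theorem prime_of_mem_testPrimes {t : (n : Icc 2 h) → Fin (bK K n + 1)} {P : Ideal (𝓞 K)}
    (hP : P ∈ testPrimes S t) : Prime P := by
  obtain ⟨n, -, hPn⟩ := mem_biUnion.mp hP
  refine Ideal.prime_of_isPrime (fun hbot => ?_) (hS n _ P hPn).1
  have := mem_Icc.mp (absNorm_mem_Icc_of_mem_testPrimes hS hP)
  simp [hbot] at this

theorem filter_testPrimes_absNorm_eq (t : (n : Icc 2 h) → Fin (bK K n + 1)) (n : Icc 2 h) :
    {P ∈ testPrimes S t | Ideal.absNorm P = n} = S n (t n) := by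
  ext P
  simp only [testPrimes, mem_filter, mem_biUnion, mem_univ, true_and]
  constructor
  · rintro ⟨⟨m, hPm⟩, hPn⟩
    rwa [Subtype.ext ((hS m _ P hPm).2.symm.trans hPn)] at hPm
  · exact fun hPn => ⟨⟨n, hPn⟩, (hS n _ P hPn).2⟩

theorem filter_testPrimes_absNorm_lt_congr {t t' : (n : Icc 2 h) → Fin (bK K n + 1)}
    {n : ℕ} (htt : ∀ m : Icc 2 h, m < n → t m = t' m) :
    {P ∈ testPrimes S t | Ideal.absNorm P < n} = {P ∈ testPrimes S t' | Ideal.absNorm P < n} := by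
  ext P
  simp only [testPrimes, mem_filter, mem_biUnion, mem_univ, true_and]
  constructor
  all_goals
    rintro ⟨⟨m, hPm⟩, hPn⟩
    have hm : (m : ℕ) < n := (hS m _ P hPm).2 ▸ hPn
  · exact ⟨⟨m, htt m hm ▸ hPm⟩, hPn⟩
  · exact ⟨⟨m, (htt m hm).symm ▸ hPm⟩, hPn⟩

variable (hcard : ∀ n k, #(S n k) = k)
include hcard

theorem numDivisorsOfNorm_prod_testPrimes (t : (n : Icc 2 h) → Fin (bK K n + 1)) (n : Icc 2 h) :
    numDivisorsOfNorm (∏ P ∈ testPrimes S t, P) n = t n +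
      #{U ∈ {P ∈ testPrimes S t | Ideal.absNorm P < n}.powerset |
        ∏ P ∈ U, Ideal.absNorm P = n} := by
  have hnorm (P) (hP : P ∈ testPrimes S t) : 2 ≤ Ideal.absNorm P :=
    (mem_Icc.mp (absNorm_mem_Icc_of_mem_testPrimes hS hP)).1
  rw [numDivisorsOfNorm_prod_primes (fun P => prime_of_mem_testPrimes hS),
    card_filter_powerset_prod_eq hnorm, filter_testPrimes_absNorm_eq hS, hcard]

theorem testPrimes_injective :
    Function.Injective fun t : (n : Icc 2 h) → Fin (bK K n + 1) =>
      divisorCounts h (∏ P ∈ testPrimes S t, P) := by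
  intro t t' htt
  funext n
  induction n using WellFoundedLT.induction with
  | ind n ih =>
    have := congrFun htt n
    simp only [divisorCounts, numDivisorsOfNorm_prod_testPrimes hS hcard,
      filter_testPrimes_absNorm_lt_congr hS (n := n) ih] at this
    exact Fin.ext (by omega)

end TestIdeals

theorem stmt12_general (r : ℝ) (hr : 1 < r) (K : Type*) [Field K] [NumberField K]
    (h : ℕ)
    (hyp : ∀ d : ℕ, 2 ≤ d → d ≤ h →
      ∑' n : {n : ℕ // d < n}, (aK K (n : ℕ) : ℝ) * ((n : ℕ) : ℝ) ^ (-r)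
        < (d : ℝ) ^ (-r)) :
    ((∏ n ∈ Finset.Icc 2 h, (bK K n + 1) : ℕ) : Cardinal) ≤
      Cardinal.mk (ConnectedComponents
        ↥(closure (sigmaK K r '' {I : Ideal (𝓞 K) | I ≠ 0}))) := by
  choose S hS hcard using fun (n : ℕ) (k : Fin (bK K n + 1)) =>
    exists_finset_primes_of_absNorm_eq (K := K) (Nat.lt_succ_iff.mp k.2)
  calc ((∏ n ∈ Finset.Icc 2 h, (bK K n + 1) : ℕ) : Cardinal)
      = Cardinal.mk ((n : Finset.Icc 2 h) → Fin (bK K n + 1)) := by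
        rw [Cardinal.mk_fintype, Fintype.card_pi]
        simp only [Fintype.card_fin]
        exact congrArg _ (Finset.prod_coe_sort _ _).symm
    _ ≤ Cardinal.mk (divisorCounts h '' {I | I ≠ 0}) :=
        Cardinal.mk_le_of_injective (f := fun t => ⟨divisorCounts h (∏ P ∈ testPrimes S t, P),
          _, Finset.prod_ne_zero_iff.mpr fun _ hP => (prime_of_mem_testPrimes hS hP).ne_zero, rfl⟩)
          fun _ _ htt => testPrimes_injective hS hcard (congrArg Subtype.val htt)
    _ ≤ _ := mk_image_le_mk_connectedComponents_closure _ _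
        ((finite_range_divisorCounts h).subset (Set.image_subset_range _ _))
        fun _ _ hij => exists_pos_le_dist_sigmaK_of_divisorCounts_ne hr hyp hij

/-- If `h ≥ 1` is such that `d^{-r} > ∑_{n > d} a_K(n) n^{-r}` for all `2 ≤ d ≤ h`, then the
closure of `σ_{r,K}(I_K)` has at least `∏_{n=2}^{h} (b_K(n) + 1)` connected components. -/
theorem stmt12 (r : ℝ) (hr : 1 < r) (K : Type*) [Field K] [NumberField K]
    (h : ℕ) (hh : 1 ≤ h)
    (hyp : ∀ d : ℕ, 2 ≤ d → d ≤ h →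
      ∑' n : {n : ℕ // d < n}, (aK K (n : ℕ) : ℝ) * ((n : ℕ) : ℝ) ^ (-r)
        < (d : ℝ) ^ (-r)) :
    ((∏ n ∈ Finset.Icc 2 h, (bK K n + 1) : ℕ) : Cardinal) ≤
      Cardinal.mk (ConnectedComponents
        ↥(closure (sigmaK K r '' {I : Ideal (𝓞 K) | I ≠ 0}))) :=
  stmt12_general r hr K h hyp
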